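/- Fix x ∈ ℂ and k ≥ 1, and assume p_i'(x) ≠ 0 for i = 1, …, k, where p_i are the Mandelbrot polynomials. Define sequences by q̂_0 = 1 + x, d_0 = 1, α_0 = 1, and for i ≥ 0: v_i = 2x·q̂_i·d_i + q̂_i², β_i = 1/|v_i|, d_{i+1} = v_i·β_i, q̂_{i+1} = (x·q̂_i² + α_i²)·β_i, α_{i+1} = α_i²·β_i. Then for every 0 ≤ i ≤ k−1: v_i ≠ 0 (for i ≤ k−2), α_i = 1/|p_{i+1}'(x)|, q̂_i = α_i·p_{i+1}(x), d_i = α_i·p_{i+1}'(x), and |d_i| = 1; in particular q̂_{k-1}/d_{k-1} = p_k(x)/p_k'(x). -/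

import Mathlib

/-!
Write `P_j = p_j(x)` and `P'_j = p_j'(x)`. The recursion evaluates the pairs `(P_{i+1}, P'_{i+1})`
through `p_{j+1} = X p_j² + 1` and `p_{j+1}' = p_j² + 2X p_j p_j'`, rescaled at every step. By
induction `q̂_i = α_i P_{i+1}` and `d_i = α_i P'_{i+1}`: then `v_i = α_i² P'_{i+2}`, so dividing by
`|v_i|` makes `α_{i+1} = α_i² / |v_i| = 1 / |P'_{i+2}|`. Hence every `d_i` has modulus one, and the
common factor `α_{k-1}` cancels in `q̂_{k-1} / d_{k-1}`.
-/

open Polynomial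

/-- The Mandelbrot polynomials `p_0(X) = 1`, `p_{j+1}(X) = X·p_j(X)^2 + 1`. -/
noncomputable def mandelbrotP : ℕ → Polynomial ℂ
  | 0 => 1
  | (j + 1) => X * (mandelbrotP j) ^ 2 + 1

lemma eval_mandelbrotP_succ (x : ℂ) (j : ℕ) :
    (mandelbrotP (j + 1)).eval x = x * (mandelbrotP j).eval x ^ 2 + 1 := by
  simp [mandelbrotP]

lemma eval_derivative_mandelbrotP_succ (x : ℂ) (j : ℕ) :
    (derivative (mandelbrotP (j + 1))).eval x =
      (mandelbrotP j).eval x ^ 2 +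
        2 * x * (mandelbrotP j).eval x * (derivative (mandelbrotP j)).eval x := by
  simp [mandelbrotP, derivative_pow]
  ring

lemma sq_mul_one_div_norm_sq_mul {a : ℝ} (ha : a ≠ 0) (w : ℂ) :
    a ^ 2 * (1 / ‖(a : ℂ) ^ 2 * w‖) = 1 / ‖w‖ := by
  rw [norm_mul, norm_pow, Complex.norm_real, Real.norm_eq_abs, sq_abs, mul_one_div,
    div_mul_cancel_left₀ (pow_ne_zero 2 ha), one_div]

lemma norm_one_div_norm_mul_self {z : ℂ} (hz : z ≠ 0) : ‖((1 / ‖z‖ : ℝ) : ℂ) * z‖ = 1 := by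
  rw [norm_mul, Complex.norm_real, Real.norm_eq_abs, abs_of_nonneg (by positivity),
    one_div_mul_cancel (norm_ne_zero_iff.mpr hz)]

section NewtonRecursion

variable {x : ℂ} {qh d v : ℕ → ℂ} {α β : ℕ → ℝ}

lemma v_eq_sq_mul_derivative (hv : ∀ i : ℕ, v i = 2 * x * qh i * d i + (qh i) ^ 2) {i : ℕ}
    (hqi : qh i = (α i : ℂ) * (mandelbrotP (i + 1)).eval x)
    (hdi : d i = (α i : ℂ) * (derivative (mandelbrotP (i + 1))).eval x) :
    v i = (α i : ℂ) ^ 2 * (derivative (mandelbrotP (i + 2))).eval x := by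
  rw [hv, hqi, hdi, eval_derivative_mandelbrotP_succ x (i + 1)]
  ring

lemma qh_d_eq_scaled_succ (hv : ∀ i : ℕ, v i = 2 * x * qh i * d i + (qh i) ^ 2)
    (hβ : ∀ i : ℕ, β i = 1 / ‖v i‖)
    (hd : ∀ i : ℕ, d (i + 1) = v i * (β i : ℂ))
    (hq : ∀ i : ℕ, qh (i + 1) = (x * (qh i) ^ 2 + ((α i : ℂ)) ^ 2) * (β i : ℂ))
    (hα : ∀ i : ℕ, α (i + 1) = (α i) ^ 2 * β i) {i : ℕ} (hαi : α i ≠ 0)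
    (hqi : qh i = (α i : ℂ) * (mandelbrotP (i + 1)).eval x)
    (hdi : d i = (α i : ℂ) * (derivative (mandelbrotP (i + 1))).eval x) :
    α (i + 1) = 1 / ‖(derivative (mandelbrotP (i + 2))).eval x‖ ∧
      qh (i + 1) = (α (i + 1) : ℂ) * (mandelbrotP (i + 2)).eval x ∧
      d (i + 1) = (α (i + 1) : ℂ) * (derivative (mandelbrotP (i + 2))).eval x := by
  have hvi := v_eq_sq_mul_derivative hv hqi hdi
  refine ⟨?_, ?_, ?_⟩
  · rw [hα, hβ, hvi, sq_mul_one_div_norm_sq_mul hαi]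
  · rw [hq, hqi, hα, eval_mandelbrotP_succ x (i + 1)]
    push_cast
    ring
  · rw [hd, hvi, hα]
    push_cast
    ring

lemma qh_d_eq_scaled_of_succ_le {k : ℕ}
    (hder : ∀ i : ℕ, 1 ≤ i → i ≤ k → (derivative (mandelbrotP i)).eval x ≠ 0)
    (hq0 : qh 0 = 1 + x) (hd0 : d 0 = 1) (hα0 : α 0 = 1)
    (hv : ∀ i : ℕ, v i = 2 * x * qh i * d i + (qh i) ^ 2)
    (hβ : ∀ i : ℕ, β i = 1 / ‖v i‖)
    (hd : ∀ i : ℕ, d (i + 1) = v i * (β i : ℂ))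
    (hq : ∀ i : ℕ, qh (i + 1) = (x * (qh i) ^ 2 + ((α i : ℂ)) ^ 2) * (β i : ℂ))
    (hα : ∀ i : ℕ, α (i + 1) = (α i) ^ 2 * β i) :
    ∀ i : ℕ, i + 1 ≤ k →
      α i = 1 / ‖(derivative (mandelbrotP (i + 1))).eval x‖ ∧
      qh i = (α i : ℂ) * (mandelbrotP (i + 1)).eval x ∧
      d i = (α i : ℂ) * (derivative (mandelbrotP (i + 1))).eval x := by
  intro i
  induction i with
  | zero =>
    intro _
    simp [mandelbrotP, hq0, hd0, hα0, add_comm]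
  | succ i ih =>
    intro hik
    obtain ⟨hαi, hqi, hdi⟩ := ih (by omega)
    have hαi_ne : α i ≠ 0 := by
      rw [hαi]
      exact one_div_ne_zero (norm_ne_zero_iff.mpr (hder (i + 1) (by omega) (by omega)))
    exact qh_d_eq_scaled_succ hv hβ hd hq hα hαi_ne hqi hdi

end NewtonRecursion

theorem stmt_13 (x : ℂ) (k : ℕ) (hk : 1 ≤ k)
    (hder : ∀ i : ℕ, 1 ≤ i → i ≤ k → (derivative (mandelbrotP i)).eval x ≠ 0)
    (qh d v : ℕ → ℂ) (α β : ℕ → ℝ)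
    (hq0 : qh 0 = 1 + x) (hd0 : d 0 = 1) (hα0 : α 0 = 1)
    (hv : ∀ i : ℕ, v i = 2 * x * qh i * d i + (qh i) ^ 2)
    (hβ : ∀ i : ℕ, β i = 1 / ‖v i‖)
    (hd : ∀ i : ℕ, d (i + 1) = v i * (β i : ℂ))
    (hq : ∀ i : ℕ, qh (i + 1) = (x * (qh i) ^ 2 + ((α i : ℂ)) ^ 2) * (β i : ℂ))
    (hα : ∀ i : ℕ, α (i + 1) = (α i) ^ 2 * β i) :
    (∀ i : ℕ, i + 1 ≤ k →
      (i + 2 ≤ k → v i ≠ 0) ∧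
      α i = 1 / ‖(derivative (mandelbrotP (i + 1))).eval x‖ ∧
      qh i = (α i : ℂ) * (mandelbrotP (i + 1)).eval x ∧
      d i = (α i : ℂ) * (derivative (mandelbrotP (i + 1))).eval x ∧
      ‖d i‖ = 1) ∧
    qh (k - 1) / d (k - 1) =
      (mandelbrotP k).eval x / (derivative (mandelbrotP k)).eval x := by
  have hscaled := qh_d_eq_scaled_of_succ_le hder hq0 hd0 hα0 hv hβ hd hq hα
  have hα_ne : ∀ i : ℕ, i + 1 ≤ k → (α i : ℂ) ≠ 0 := fun i hi => by
    rw [(hscaled i hi).1, Complex.ofReal_ne_zero]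
    exact one_div_ne_zero (norm_ne_zero_iff.mpr (hder (i + 1) (by omega) hi))
  refine ⟨fun i hi => ?_, ?_⟩
  · obtain ⟨hαi, hqi, hdi⟩ := hscaled i hi
    refine ⟨fun hi₂ => ?_, hαi, hqi, hdi, ?_⟩
    · rw [v_eq_sq_mul_derivative hv hqi hdi]
      exact mul_ne_zero (pow_ne_zero 2 (hα_ne i hi)) (hder (i + 2) (by omega) hi₂)
    · rw [hdi, hαi]
      exact norm_one_div_norm_mul_self (hder (i + 1) (by omega) hi)
  · obtain ⟨-, hqk, hdk⟩ := hscaled (k - 1) (by omega)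
    rw [hqk, hdk, mul_div_mul_left _ _ (hα_ne (k - 1) (by omega)), Nat.sub_add_cancel hk]
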